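/- There exists an ordered type alphabet (with arity not compatible with the ordering) for which the subtype relation on types is not transitive. Concretely, with A = {K₁, K₂, L₁, L₂}, #K₁ = #K₂ = 0, #L₁ = #L₂ = 1, and L₁ ≤ K₁ ≤ K₂ ≤ L₂, one has L₁(K₂) ≤ K₁ and K₁ ≤ L₂(K₁), but not L₁(K₂) ≤ L₂(K₁). -/

import Mathlib

/-- Types over a type alphabet `C`: type parameters (indexed by `ℕ`) and
applications of type constructors to lists of types. -/
inductive Ty (C : Type) where
  | param : ℕ → Ty C
  | con : C → List (Ty C) → Ty C

/-- The subtype relation on types: `α ≤ α` for parameters, and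
`K(σ₁,…,σ_m) ≤ L(τ₁,…,τ_n)` iff `K ≤ L` and `σ_i ≤ τ_i` for all `i < min m n`. -/
inductive Subty {C : Type} [LE C] : Ty C → Ty C → Prop where
  | param (n : ℕ) : Subty (.param n) (.param n)
  | con {K L : C} {ss ts : List (Ty C)} :
      K ≤ L →
      (∀ i (h1 : i < ss.length) (h2 : i < ts.length), Subty ss[i] ts[i]) →
      Subty (.con K ss) (.con L ts)

/-- Well-formed types with respect to an arity function `ar`:
every constructor is applied to exactly `ar K` arguments. -/
inductive WF {C : Type} (ar : C → ℕ) : Ty C → Prop where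
  | param (n : ℕ) : WF ar (.param n)
  | con {K : C} {ss : List (Ty C)} :
      ss.length = ar K → (∀ σ ∈ ss, WF ar σ) → WF ar (.con K ss)

/-- The arity function is compatible with the ordering on the type alphabet. -/
def Compatible {C : Type} [LE C] (ar : C → ℕ) : Prop :=
  ∀ K L M : C, K ≤ L → L ≤ M → min (ar K) (ar M) ≤ ar L

/-- The type alphabet of the counterexample: `L₁ ≤ K₁ ≤ K₂ ≤ L₂`. -/
inductive Alpha where
  | L1 | K1 | K2 | L2
deriving DecidableEq

/-- Rank realizing the chain `L₁ ≤ K₁ ≤ K₂ ≤ L₂`. -/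
def Alpha.rank : Alpha → ℕ
  | .L1 => 0 | .K1 => 1 | .K2 => 2 | .L2 => 3

instance : LE Alpha := ⟨fun a b => a.rank ≤ b.rank⟩

/-- Arity: `#K₁ = #K₂ = 0`, `#L₁ = #L₂ = 1`. -/
def Alpha.ar : Alpha → ℕ
  | .L1 => 1 | .K1 => 0 | .K2 => 0 | .L2 => 1

/-! A constructor without arguments compares with any argument list, so a chain
`L₁(K₂) ≤ K₁ ≤ L₂(K₁)` through the nullary `K₁` forgets the arguments, whereas the direct
comparison `L₁(K₂) ≤ L₂(K₁)` demands `K₂ ≤ K₁`. -/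

namespace Subty

variable {C : Type} [LE C]

theorem con_iff {K L : C} {ss ts : List (Ty C)} :
    Subty (.con K ss) (.con L ts) ↔
      K ≤ L ∧ ∀ i (h1 : i < ss.length) (h2 : i < ts.length), Subty ss[i] ts[i] := by
  refine ⟨fun h => ?_, fun ⟨hKL, hargs⟩ => .con hKL hargs⟩
  cases h with
  | con hKL hargs => exact ⟨hKL, hargs⟩

theorem con_nil_left {K L : C} (hKL : K ≤ L) (ts : List (Ty C)) :
    Subty (.con K []) (.con L ts) :=
  .con hKL fun _ h1 _ => absurd h1 (Nat.not_lt_zero _)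

theorem con_nil_right {K L : C} (hKL : K ≤ L) (ss : List (Ty C)) :
    Subty (.con K ss) (.con L []) :=
  .con hKL fun _ _ h2 => absurd h2 (Nat.not_lt_zero _)

theorem con_singleton_iff {K L : C} {σ τ : Ty C} :
    Subty (.con K [σ]) (.con L [τ]) ↔ K ≤ L ∧ Subty σ τ := by
  simp only [con_iff, List.length_singleton, Nat.lt_one_iff]
  constructor
  · rintro ⟨hKL, hargs⟩
    exact ⟨hKL, hargs 0 rfl rfl⟩
  · rintro ⟨hKL, hστ⟩
    refine ⟨hKL, ?_⟩
    rintro _ rfl -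
    exact hστ

end Subty

theorem not_compatible_of_lt {C : Type} [LE C] {ar : C → ℕ} {K L M : C}
    (hKL : K ≤ L) (hLM : L ≤ M) (h : ar L < min (ar K) (ar M)) : ¬ Compatible ar :=
  fun hc => (hc K L M hKL hLM).not_gt h

/-- for this ordered type alphabet the arity is not compatible
with the ordering, and the subtype relation on types is not transitive:
`L₁(K₂) ≤ K₁` and `K₁ ≤ L₂(K₁)`, but not `L₁(K₂) ≤ L₂(K₁)`. -/
theorem subty_not_transitive :
    ¬ Compatible Alpha.ar ∧
    Subty (Ty.con Alpha.L1 [Ty.con Alpha.K2 []]) (Ty.con Alpha.K1 []) ∧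
    Subty (Ty.con Alpha.K1 []) (Ty.con Alpha.L2 [Ty.con Alpha.K1 []]) ∧
    ¬ Subty (Ty.con Alpha.L1 [Ty.con Alpha.K2 []])
        (Ty.con Alpha.L2 [Ty.con Alpha.K1 []]) := by
  refine ⟨?_, Subty.con_nil_right (by decide) _, Subty.con_nil_left (by decide) _, ?_⟩
  · exact not_compatible_of_lt (K := .L1) (L := .K1) (M := .L2) (by decide) (by decide)
      (by decide)
  · intro h
    have hK2K1 : Alpha.K2 ≤ Alpha.K1 := (Subty.con_iff.mp (Subty.con_singleton_iff.mp h).2).1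
    exact absurd hK2K1 (by decide)
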